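/- Let γ ∈ (0,2), C > 0, and let ψ : (0,∞) → [0,∞) be nonincreasing with ψ(y) ≤ C·y^{−γ} for all y > 0. Then there exists a constant C' > 0, depending only on C and γ, such that for all a > 0 and all t > 0, |∫_0^a sin(ty)·ψ(y) dy| ≤ C'·t^{γ−1}. -/

import Mathlib

/-!
Split the integral at `1/t`. On `(0, 1/t]` use `|sin (t y)| ≤ t y` and the bound on `ψ`: the
integrand is at most `C t y^(1-γ)`, integrable because `γ < 2`, with integral
`C t^(γ-1) / (2-γ)`. On `[1/t, a]` the sine oscillates: averaging the integral with its
translate by the half period `π/t`, under which `sin (t y)` changes sign, leaves two end pieces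
of length `π/t` and the integral of `sin (t y) (ψ y - ψ (y - π/t))`, which telescopes because
`ψ` is monotone. Hence that part is `O(ψ(1/t)/t) = O(C t^(γ-1))`.
-/

open MeasureTheory Set Real intervalIntegral

lemma abs_sin_mul_le_mul_rpow {t y v C γ : ℝ} (ht : 0 ≤ t) (hy : 0 < y)
    (hv : |v| ≤ C * y ^ (-γ)) : |sin (t * y) * v| ≤ C * t * y ^ (1 - γ) := by
  have hsin : |sin (t * y)| ≤ t * y := abs_sin_le_abs.trans_eq (abs_of_nonneg (by positivity))
  calc |sin (t * y) * v| = |sin (t * y)| * |v| := abs_mul _ _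
    _ ≤ t * y * (C * y ^ (-γ)) := mul_le_mul hsin hv (abs_nonneg _) (by positivity)
    _ = C * t * y ^ (1 - γ) := by rw [sub_eq_add_neg, rpow_add hy, rpow_one]; ring

section NearZero

variable {ψ : ℝ → ℝ} {C γ t c : ℝ}

lemma intervalIntegrable_sin_mul_of_abs_le_rpow (hγ : γ < 2) (ht : 0 ≤ t) (hc : 0 ≤ c)
    (hψm : AEStronglyMeasurable ψ (volume.restrict (Ioc 0 c)))
    (hψ : ∀ y, 0 < y → |ψ y| ≤ C * y ^ (-γ)) :
    IntervalIntegrable (fun y => sin (t * y) * ψ y) volume 0 c := by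
  refine ((intervalIntegrable_rpow' (r := 1 - γ) (by linarith)).const_mul (C * t)).mono_fun' ?_ ?_
    <;> rw [uIoc_of_le hc]
  · exact (continuous_sin.comp (continuous_const_mul t)).aestronglyMeasurable.mul hψm
  · exact (ae_restrict_mem measurableSet_Ioc).mono fun y hy =>
      abs_sin_mul_le_mul_rpow ht hy.1 (hψ y hy.1)

lemma abs_integral_sin_mul_le_of_abs_le_rpow (hγ : γ < 2) (ht : 0 ≤ t) (hc : 0 ≤ c)
    (hψ : ∀ y, 0 < y → |ψ y| ≤ C * y ^ (-γ)) :
    |∫ y in 0..c, sin (t * y) * ψ y| ≤ C * t * c ^ (2 - γ) / (2 - γ) := by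
  have hC : 0 ≤ C := by simpa using (abs_nonneg _).trans (hψ 1 one_pos)
  have hbound : ∀ᵐ y ∂volume.restrict (uIoc 0 c),
      ‖sin (t * y) * ψ y‖ ≤ C * t * y ^ (1 - γ) := by
    rw [uIoc_of_le hc]
    exact (ae_restrict_mem measurableSet_Ioc).mono fun y hy =>
      abs_sin_mul_le_mul_rpow ht hy.1 (hψ y hy.1)
  have hint : ∫ y in 0..c, C * t * y ^ (1 - γ) = C * t * c ^ (2 - γ) / (2 - γ) := by
    rw [intervalIntegral.integral_const_mul, integral_rpow (Or.inl (by linarith)),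
      zero_rpow (by linarith), show 1 - γ + 1 = 2 - γ by ring]
    ring
  calc |∫ y in 0..c, sin (t * y) * ψ y| ≤ |∫ y in 0..c, C * t * y ^ (1 - γ)| :=
        norm_integral_le_abs_of_norm_le hbound
          ((intervalIntegrable_rpow' (by linarith)).const_mul _)
    _ = C * t * c ^ (2 - γ) / (2 - γ) := by
        rw [hint, abs_of_nonneg (div_nonneg (by positivity) (by linarith))]

lemma abs_integral_sin_mul_le_of_le_inv (hγ : γ < 2) (ht : 0 < t) (hc : 0 ≤ c)
    (hct : c ≤ t⁻¹) (hψ : ∀ y, 0 < y → |ψ y| ≤ C * y ^ (-γ)) :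
    |∫ y in 0..c, sin (t * y) * ψ y| ≤ C / (2 - γ) * t ^ (γ - 1) := by
  have hC : 0 ≤ C := by simpa using (abs_nonneg _).trans (hψ 1 one_pos)
  have hscale : t * t⁻¹ ^ (2 - γ) = t ^ (γ - 1) := by
    rw [inv_rpow ht.le, ← rpow_neg ht.le, show γ - 1 = 1 + -(2 - γ) by ring, rpow_add ht,
      rpow_one]
  calc _ ≤ C * t * c ^ (2 - γ) / (2 - γ) :=
        abs_integral_sin_mul_le_of_abs_le_rpow hγ ht.le hc hψ
    _ ≤ C * t * t⁻¹ ^ (2 - γ) / (2 - γ) := by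
        have : 0 < 2 - γ := by linarith
        gcongr
    _ = C / (2 - γ) * t ^ (γ - 1) := by rw [mul_assoc, hscale]; ring

end NearZero

lemma IntervalIntegrable.mono_set_Icc {f : ℝ → ℝ} {μ : Measure ℝ} {a b x y : ℝ}
    (hf : IntervalIntegrable f μ b a) (hx : x ∈ Icc b a) (hy : y ∈ Icc b a) :
    IntervalIntegrable f μ x y :=
  hf.mono_set (uIcc_subset_uIcc (Icc_subset_uIcc hx) (Icc_subset_uIcc hy))

section Shift

variable {f : ℝ → ℝ} {a b δ : ℝ}

lemma integral_comp_sub_right_eq_sub (hf : IntervalIntegrable f volume b a) (hδ : 0 ≤ δ)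
    (hba : b + δ ≤ a) :
    ∫ y in (b + δ)..a, f (y - δ) = (∫ y in b..a, f y) - ∫ y in (a - δ)..a, f y := by
  rw [integral_comp_sub_right, add_sub_cancel_right, eq_sub_iff_add_eq]
  exact integral_add_adjacent_intervals
    (hf.mono_set_Icc ⟨le_rfl, by linarith⟩ ⟨by linarith, by linarith⟩)
    (hf.mono_set_Icc ⟨by linarith, by linarith⟩ ⟨by linarith, le_rfl⟩)

lemma integral_eq_sub_integral (hf : IntervalIntegrable f volume b a) (hδ : 0 ≤ δ)
    (hba : b + δ ≤ a) :
    ∫ y in (b + δ)..a, f y = (∫ y in b..a, f y) - ∫ y in b..(b + δ), f y :=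
  (integral_interval_sub_left hf
    (hf.mono_set_Icc ⟨le_rfl, by linarith⟩ ⟨by linarith, hba⟩)).symm

lemma IntervalIntegrable.comp_sub_right_of_le (hf : IntervalIntegrable f volume b a)
    (hδ : 0 ≤ δ) (hba : b + δ ≤ a) :
    IntervalIntegrable (fun y => f (y - δ)) volume (b + δ) a := by
  simpa using (hf.mono_set_Icc ⟨le_rfl, by linarith⟩ ⟨by linarith, by linarith⟩ :
    IntervalIntegrable f volume b (a - δ)).comp_sub_right δ

end Shift

section Oscillation

variable {ψ : ℝ → ℝ} {a b t : ℝ}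

lemma intervalIntegrable_sin_mul_of_antitoneOn (hab : b ≤ a) (hψ : AntitoneOn ψ (Icc b a)) :
    IntervalIntegrable (fun y => sin (t * y) * ψ y) volume b a :=
  (AntitoneOn.intervalIntegrable (by rwa [uIcc_of_le hab])).continuousOn_mul (by fun_prop)

lemma abs_integral_sin_mul_le_sub_mul (hab : b ≤ a) (hψ : AntitoneOn ψ (Icc b a))
    (ha : 0 ≤ ψ a) :
    |∫ y in b..a, sin (t * y) * ψ y| ≤ (a - b) * ψ b := by
  have hbound : ∀ y ∈ uIoc b a, ‖sin (t * y) * ψ y‖ ≤ ψ b := by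
    intro y hy
    rw [uIoc_of_le hab] at hy
    have hy' : y ∈ Icc b a := Ioc_subset_Icc_self hy
    have hψy : 0 ≤ ψ y := ha.trans (hψ hy' (right_mem_Icc.2 hab) hy.2)
    rw [norm_mul, Real.norm_of_nonneg hψy]
    exact (mul_le_of_le_one_left hψy (abs_sin_le_one _)).trans (hψ (left_mem_Icc.2 hab) hy' hy'.1)
  simpa [abs_of_nonneg (sub_nonneg.2 hab), mul_comm] using
    norm_integral_le_of_norm_le_const hbound

lemma abs_integral_sin_mul_add_shift_le (ht : 0 < t) (hψ : AntitoneOn ψ (Icc b a))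
    (ha : 0 ≤ ψ a) (hba : b + π / t ≤ a) :
    |∫ y in (b + π / t)..a, (sin (t * y) * ψ y + sin (t * (y - π / t)) * ψ (y - π / t))|
      ≤ π / t * ψ b := by
  set δ := π / t with hδ_def
  have hδ : 0 ≤ δ := by positivity
  have hab : b ≤ a := by linarith
  have hψi : IntervalIntegrable ψ volume b a :=
    AntitoneOn.intervalIntegrable (by rwa [uIcc_of_le hab])
  have hψi' : IntervalIntegrable ψ volume (b + δ) a :=
    hψi.mono_set_Icc ⟨by linarith, hba⟩ ⟨hab, le_rfl⟩
  -- `sin` changes sign under a shift by half a period, so the two terms nearly cancel.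
  have hbound : ∀ᵐ y, y ∈ Ioc (b + δ) a →
      ‖sin (t * y) * ψ y + sin (t * (y - δ)) * ψ (y - δ)‖ ≤ ψ (y - δ) - ψ y := by
    refine ae_of_all _ fun y hy => ?_
    have hmono : 0 ≤ ψ (y - δ) - ψ y := sub_nonneg.2 <|
      hψ ⟨by linarith [hy.1], by linarith [hy.2]⟩ ⟨by linarith [hy.1], hy.2⟩ (by linarith)
    have hsin : sin (t * (y - δ)) = -sin (t * y) := by
      rw [mul_sub, hδ_def, mul_div_cancel₀ _ ht.ne', sin_sub_pi]
    have hsum : sin (t * y) * ψ y + sin (t * (y - δ)) * ψ (y - δ)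
        = -(sin (t * y) * (ψ (y - δ) - ψ y)) := by
      rw [hsin]; ring
    rw [hsum, norm_neg, norm_mul, Real.norm_of_nonneg hmono]
    exact mul_le_of_le_one_left hmono (abs_sin_le_one _)
  have htelescope : ∫ y in (b + δ)..a, (ψ (y - δ) - ψ y)
      = (∫ y in b..(b + δ), ψ y) - ∫ y in (a - δ)..a, ψ y := by
    rw [integral_sub (hψi.comp_sub_right_of_le hδ hba) hψi',
      integral_comp_sub_right_eq_sub hψi hδ hba, integral_eq_sub_integral hψi hδ hba]
    ring
  have hhead : ∫ y in b..(b + δ), ψ y ≤ δ * ψ b := by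
    refine (integral_mono_on (by linarith)
      (hψi.mono_set_Icc ⟨le_rfl, hab⟩ ⟨by linarith, hba⟩)
      (intervalIntegrable_const (c := ψ b)) fun y hy => ?_).trans_eq (by simp)
    exact hψ ⟨le_rfl, hab⟩ ⟨hy.1, by linarith [hy.2]⟩ hy.1
  have htail : 0 ≤ ∫ y in (a - δ)..a, ψ y :=
    integral_nonneg (by linarith) fun y hy =>
      ha.trans (hψ ⟨by linarith [hy.1], hy.2⟩ ⟨hab, le_rfl⟩ hy.2)
  calc _ ≤ ∫ y in (b + δ)..a, (ψ (y - δ) - ψ y) :=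
        norm_integral_le_of_norm_le hba hbound ((hψi.comp_sub_right_of_le hδ hba).sub hψi')
    _ ≤ δ * ψ b := by linarith

lemma abs_integral_sin_mul_le_of_antitoneOn (ht : 0 < t) (hab : b ≤ a)
    (hψ : AntitoneOn ψ (Icc b a)) (ha : 0 ≤ ψ a) :
    |∫ y in b..a, sin (t * y) * ψ y| ≤ 2 * π / t * ψ b := by
  set δ := π / t with hδ_def
  have hδ : 0 ≤ δ := by positivity
  have hψb : 0 ≤ ψ b := ha.trans (hψ ⟨le_rfl, hab⟩ ⟨hab, le_rfl⟩ hab)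
  rcases le_or_gt a (b + δ) with hshort | hlong
  · calc _ ≤ (a - b) * ψ b := abs_integral_sin_mul_le_sub_mul hab hψ ha
      _ ≤ 2 * π / t * ψ b := by
        rw [mul_div_assoc, ← hδ_def]; gcongr; linarith
  set f : ℝ → ℝ := fun y => sin (t * y) * ψ y
  have hf : IntervalIntegrable f volume b a := intervalIntegrable_sin_mul_of_antitoneOn hab hψ
  have hsplit : 2 * ∫ y in b..a, f y = (∫ y in (b + δ)..a, (f y + f (y - δ)))
      + (∫ y in b..(b + δ), f y) + ∫ y in (a - δ)..a, f y := by
    rw [integral_add (hf.mono_set_Icc ⟨by linarith, hlong.le⟩ ⟨hab, le_rfl⟩)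
      (hf.comp_sub_right_of_le hδ hlong.le), integral_comp_sub_right_eq_sub hf hδ hlong.le,
      integral_eq_sub_integral hf hδ hlong.le]
    ring
  have hmid := abs_integral_sin_mul_add_shift_le ht hψ ha hlong.le
  have hhead : |∫ y in b..(b + δ), f y| ≤ δ * ψ b := by
    simpa using abs_integral_sin_mul_le_sub_mul (by linarith)
      (hψ.mono (Icc_subset_Icc_right hlong.le))
      (ha.trans (hψ ⟨by linarith, hlong.le⟩ ⟨hab, le_rfl⟩ hlong.le))
  have htail : |∫ y in (a - δ)..a, f y| ≤ δ * ψ b := by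
    calc _ ≤ (a - (a - δ)) * ψ (a - δ) := abs_integral_sin_mul_le_sub_mul (by linarith)
          (hψ.mono (Icc_subset_Icc_left (by linarith))) ha
      _ ≤ δ * ψ b := by
        rw [sub_sub_cancel]
        gcongr
        exact hψ ⟨le_rfl, hab⟩ ⟨by linarith, by linarith⟩ (by linarith)
  have htotal : 2 * |∫ y in b..a, f y| ≤ 3 * (δ * ψ b) := by
    calc 2 * |∫ y in b..a, f y| = |2 * ∫ y in b..a, f y| := by rw [abs_mul, abs_two]
      _ ≤ |∫ y in (b + δ)..a, (f y + f (y - δ))| + |∫ y in b..(b + δ), f y|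
          + |∫ y in (a - δ)..a, f y| := hsplit ▸ abs_add_three _ _ _
      _ ≤ 3 * (δ * ψ b) := by linarith
  rw [mul_div_assoc, ← hδ_def]
  linarith [mul_nonneg hδ hψb]

end Oscillation

/-- Uniform bound on truncated sine transforms: if `ψ : (0,∞) → [0,∞)` is
nonincreasing with `ψ(y) ≤ C y^{-γ}`, then `|∫_0^a sin(ty) ψ(y) dy| ≤ C' t^{γ-1}`
for all `a > 0` and `t > 0`, with `C'` depending only on `C` and `γ`. -/
theorem sine_transform_uniform_bound (γ C : ℝ) (hγ : γ ∈ Ioo (0 : ℝ) 2) (hC : 0 < C) :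
    ∃ C' > (0 : ℝ), ∀ ψ : ℝ → ℝ, AntitoneOn ψ (Ioi 0) →
      (∀ y : ℝ, 0 < y → 0 ≤ ψ y) →
      (∀ y : ℝ, 0 < y → ψ y ≤ C * y ^ (-γ)) →
      ∀ a : ℝ, 0 < a → ∀ t : ℝ, 0 < t →
        |∫ y in (0 : ℝ)..a, Real.sin (t * y) * ψ y| ≤ C' * t ^ (γ - 1) := by
  have h2γ : 0 < 2 - γ := by linarith [hγ.2]
  refine ⟨C / (2 - γ) + 2 * π * C, by positivity, fun ψ hanti hpos hbnd a ha t ht => ?_⟩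
  have habs : ∀ y, 0 < y → |ψ y| ≤ C * y ^ (-γ) := fun y hy =>
    (abs_of_nonneg (hpos y hy)).trans_le (hbnd y hy)
  rcases le_or_gt a t⁻¹ with hat | hat
  · calc _ ≤ C / (2 - γ) * t ^ (γ - 1) :=
          abs_integral_sin_mul_le_of_le_inv hγ.2 ht ha.le hat habs
      _ ≤ _ := by gcongr; simp; positivity
  have hψm : AEStronglyMeasurable ψ (volume.restrict (Ioc 0 t⁻¹)) :=
    (aemeasurable_restrict_of_antitoneOn measurableSet_Ioc
      (hanti.mono Ioc_subset_Ioi_self)).aestronglyMeasurable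
  have hanti' : AntitoneOn ψ (Icc t⁻¹ a) := hanti.mono fun y hy => (inv_pos.2 ht).trans_le hy.1
  rw [← integral_add_adjacent_intervals
    (intervalIntegrable_sin_mul_of_abs_le_rpow hγ.2 ht.le (inv_nonneg.2 ht.le) hψm habs)
    (intervalIntegrable_sin_mul_of_antitoneOn hat.le hanti')]
  have hψ : ψ t⁻¹ ≤ C * t ^ γ := by
    simpa [inv_rpow ht.le, ← rpow_neg ht.le] using hbnd t⁻¹ (inv_pos.2 ht)
  calc _ ≤ _ := abs_add_le _ _
    _ ≤ C / (2 - γ) * t ^ (γ - 1) + 2 * π / t * (C * t ^ γ) := by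
        gcongr
        · exact abs_integral_sin_mul_le_of_le_inv hγ.2 ht (inv_nonneg.2 ht.le) le_rfl habs
        · exact (abs_integral_sin_mul_le_of_antitoneOn ht hat.le hanti' (hpos a ha)).trans
            (by gcongr)
    _ = (C / (2 - γ) + 2 * π * C) * t ^ (γ - 1) := by
        rw [rpow_sub_one ht.ne']; field_simp
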